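/- Let (H, ⇀, ↼) be a matched pair of actions on a Hopf algebra H satisfying (x₁ ⇀ y₁) ⇀ (x₂ ↼ y₂) = ε(y)x for all x, y. Then the right adjoint action of H_⇀ is trivial: (x₁ ⇀ (S(x₄) ⇀ y₁)) ⇀ (x₂ ↼ (S(x₃) ⇀ y₂)) = ε(y)x for all x, y ∈ H. -/

import Mathlib

open TensorProduct Coalgebra HopfAlgebra LinearMap

noncomputable section

/-- The December 2024 `Coalgebra.Repr`, whose index type is a field rather than a parameter. -/
structure Coalgebra.ReprOld (R : Type*) {A : Type*}
    [CommSemiring R] [AddCommMonoid A] [Module R A] [CoalgebraStruct R A] (a : A) where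
  {ι : Type*}
  (index : Finset ι)
  (left : ι → A)
  (right : ι → A)
  (eq : ∑ i ∈ index, left i ⊗ₜ[R] right i = CoalgebraStruct.comul a)

universe w₁ w₂ w₃ w₄ w₅ w₆ w₇ w₈ w₉ w₁₀ w₁₁ w₁₂

variable (k H : Type*) [CommRing k] [Ring H] [HopfAlgebra k H]

/-- `f` is a left `H`-module coalgebra action of the Hopf algebra `H` on itself. -/
structure IsLeftModCoalgAction (f : H ⊗[k] H →ₗ[k] H) : Prop where
  one_act : ∀ a : H, f (1 ⊗ₜ a) = a
  mul_act : ∀ x y a : H, f ((x * y) ⊗ₜ a) = f (x ⊗ₜ f (y ⊗ₜ a))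
  counit_act : ∀ x a : H, counit (R := k) (f (x ⊗ₜ a)) = counit (R := k) x * counit (R := k) a
  comul_act : ∀ (x a : H) (rx : Coalgebra.ReprOld.{_, _, w₁} k x) (ra : Coalgebra.ReprOld.{_, _, w₂} k a),
      comul (R := k) (f (x ⊗ₜ a)) =
        ∑ i ∈ rx.index, ∑ j ∈ ra.index,
          f (rx.left i ⊗ₜ ra.left j) ⊗ₜ[k] f (rx.right i ⊗ₜ ra.right j)

/-- `g` is a right `H`-module coalgebra action of the Hopf algebra `H` on itself. -/
structure IsRightModCoalgAction (g : H ⊗[k] H →ₗ[k] H) : Prop where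
  act_one : ∀ x : H, g (x ⊗ₜ 1) = x
  act_mul : ∀ x a b : H, g (x ⊗ₜ (a * b)) = g (g (x ⊗ₜ a) ⊗ₜ b)
  counit_act : ∀ x a : H, counit (R := k) (g (x ⊗ₜ a)) = counit (R := k) x * counit (R := k) a
  comul_act : ∀ (x a : H) (rx : Coalgebra.ReprOld.{_, _, w₁} k x) (ra : Coalgebra.ReprOld.{_, _, w₂} k a),
      comul (R := k) (g (x ⊗ₜ a)) =
        ∑ i ∈ rx.index, ∑ j ∈ ra.index,
          g (rx.left i ⊗ₜ ra.left j) ⊗ₜ[k] g (rx.right i ⊗ₜ ra.right j)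

/-- `(H, f, g)` (written `(H, ⇀, ↼)`) is a matched pair of actions on the Hopf algebra `H`:
`f` is a left module coalgebra action, `g` a right module coalgebra action, satisfying the
matched pair conditions (MP1)–(MP5) and the extra condition `xy = (x₁ ⇀ y₁)(x₂ ↼ y₂)`. -/
structure IsMatchedPairOfActions (f g : H ⊗[k] H →ₗ[k] H) : Prop where
  left_action : IsLeftModCoalgAction.{w₁, w₂, _, _} k H f
  right_action : IsRightModCoalgAction.{w₃, w₄, _, _} k H g
  mp1 : ∀ (x a b : H) (rx : Coalgebra.ReprOld.{_, _, w₅} k x) (ra : Coalgebra.ReprOld.{_, _, w₆} k a),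
      f (x ⊗ₜ (a * b)) =
        ∑ i ∈ rx.index, ∑ j ∈ ra.index,
          f (rx.left i ⊗ₜ ra.left j) * f (g (rx.right i ⊗ₜ ra.right j) ⊗ₜ b)
  mp2 : ∀ x : H, f (x ⊗ₜ 1) = counit (R := k) x • (1 : H)
  mp3 : ∀ (x y a : H) (ry : Coalgebra.ReprOld.{_, _, w₇} k y) (ra : Coalgebra.ReprOld.{_, _, w₈} k a),
      g ((x * y) ⊗ₜ a) =
        ∑ i ∈ ry.index, ∑ j ∈ ra.index,
          g (x ⊗ₜ f (ry.left i ⊗ₜ ra.left j)) * g (ry.right i ⊗ₜ ra.right j)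
  mp4 : ∀ a : H, g ((1 : H) ⊗ₜ a) = counit (R := k) a • (1 : H)
  mp5 : ∀ (x a : H) (rx : Coalgebra.ReprOld.{_, _, w₉} k x) (ra : Coalgebra.ReprOld.{_, _, w₁₀} k a),
      (∑ i ∈ rx.index, ∑ j ∈ ra.index,
        f (rx.left i ⊗ₜ ra.left j) ⊗ₜ[k] g (rx.right i ⊗ₜ ra.right j)) =
      ∑ i ∈ rx.index, ∑ j ∈ ra.index,
        f (rx.right i ⊗ₜ ra.right j) ⊗ₜ[k] g (rx.left i ⊗ₜ ra.left j)
  mp_mul : ∀ (x y : H) (rx : Coalgebra.ReprOld.{_, _, w₁₁} k x) (ry : Coalgebra.ReprOld.{_, _, w₁₂} k y),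
      x * y = ∑ i ∈ rx.index, ∑ j ∈ ry.index,
        f (rx.left i ⊗ₜ ry.left j) * g (rx.right i ⊗ₜ ry.right j)

/-- The braiding operator `r(x ⊗ y) = (x₁ ⇀ y₁) ⊗ (x₂ ↼ y₂)` associated to the pair `(f, g)`. -/
def braidOp (f g : H ⊗[k] H →ₗ[k] H) : H ⊗[k] H →ₗ[k] H ⊗[k] H :=
  TensorProduct.map f g ∘ₗ (tensorTensorTensorComm k H H H H).toLinearMap
    ∘ₗ TensorProduct.map (comul (R := k)) (comul (R := k))



/-! ### Auxiliary machinery -/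

variable {k H}

section Aux

variable {M : Type*} [AddCommGroup M] [Module k M]
variable {A : Type*} [Ring A] [Algebra k A]

/-- Conversion to the current `Coalgebra.Repr`. -/
def ReprOld.toNew {a : H} (r : Coalgebra.ReprOld k a) : Coalgebra.Repr k a r.ι :=
  ⟨r.index, r.left, r.right, r.eq⟩

/-- An arbitrary old-style representation. -/
def reprArb (k : Type*) {H : Type*} [CommRing k] [Ring H] [HopfAlgebra k H] (a : H) :
    Coalgebra.ReprOld k a :=
  ⟨(ℛ k a).index, (ℛ k a).left, (ℛ k a).right, (ℛ k a).eq⟩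

lemma rO_sum_counit_tmul_eq {a : H} (r : Coalgebra.ReprOld k a) :
    ∑ i ∈ r.index, counit (R := k) (r.left i) ⊗ₜ (r.right i) = 1 ⊗ₜ[k] a :=
  Coalgebra.sum_counit_tmul_eq (R := k) (ReprOld.toNew r)

lemma rO_sum_tmul_counit_eq {a : H} (r : Coalgebra.ReprOld k a) :
    ∑ i ∈ r.index, (r.left i) ⊗ₜ counit (R := k) (r.right i) = a ⊗ₜ[k] 1 :=
  Coalgebra.sum_tmul_counit_eq (R := k) (ReprOld.toNew r)

lemma rO_sum_antipode_mul_eq {a : H} (r : Coalgebra.ReprOld k a) :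
    ∑ i ∈ r.index, antipode k (r.left i) * r.right i = algebraMap k H (counit a) :=
  HopfAlgebra.sum_antipode_mul_eq_algebraMap_counit (ReprOld.toNew r)

lemma rO_sum_mul_antipode_eq {a : H} (r : Coalgebra.ReprOld k a) :
    ∑ i ∈ r.index, r.left i * antipode k (r.right i) = algebraMap k H (counit a) :=
  HopfAlgebra.sum_mul_antipode_eq_algebraMap_counit (ReprOld.toNew r)

lemma rO_sum_antipode_mul_eq_smul {a : H} (r : Coalgebra.ReprOld k a) :
    ∑ i ∈ r.index, antipode k (r.left i) * r.right i = counit (R := k) a • 1 :=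
  HopfAlgebra.sum_antipode_mul_eq_smul (ReprOld.toNew r)

/-- Apply a linear map to a `Coalgebra.Repr`. -/
lemma repr_apply (φ : H ⊗[k] H →ₗ[k] M) {a : H} (r : Coalgebra.ReprOld k a) :
    ∑ i ∈ r.index, φ (r.left i ⊗ₜ r.right i) = φ (comul a) := by
  rw [← r.eq, map_sum]

lemma sum_counit_smul_left {a : H} (r : Coalgebra.ReprOld k a) :
    ∑ i ∈ r.index, counit (R := k) (r.left i) • r.right i = a := by
  have h2 := congrArg (TensorProduct.lid k H) (rO_sum_counit_tmul_eq r)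
  rw [map_sum] at h2
  simpa using h2

lemma sum_counit_smul_right {a : H} (r : Coalgebra.ReprOld k a) :
    ∑ i ∈ r.index, counit (R := k) (r.right i) • r.left i = a := by
  have h2 := congrArg (TensorProduct.rid k H) (rO_sum_tmul_counit_eq r)
  rw [map_sum] at h2
  simpa using h2

/-- Element-level coassociativity for representations. -/
lemma coassoc_repr {a : H} (r : Coalgebra.ReprOld k a)
    (rl : ∀ i, Coalgebra.ReprOld k (r.left i)) (rr : ∀ i, Coalgebra.ReprOld k (r.right i)) :
    ∑ i ∈ r.index, ∑ p ∈ (rl i).index,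
        ((rl i).left p ⊗ₜ[k] (rl i).right p) ⊗ₜ[k] r.right i
    = ∑ i ∈ r.index, ∑ j ∈ (rr i).index,
        (r.left i ⊗ₜ[k] (rr i).left j) ⊗ₜ[k] (rr i).right j := by
  have hL : ∑ i ∈ r.index, ∑ p ∈ (rl i).index,
      ((rl i).left p ⊗ₜ[k] (rl i).right p) ⊗ₜ[k] r.right i
      = (comul (R := k)).rTensor H (comul a) := by
    rw [← r.eq, map_sum]
    refine Finset.sum_congr rfl fun i _ => ?_
    rw [LinearMap.rTensor_tmul, ← (rl i).eq, TensorProduct.sum_tmul]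
  have hR : ∑ i ∈ r.index, ∑ j ∈ (rr i).index,
      (r.left i ⊗ₜ[k] (rr i).left j) ⊗ₜ[k] (rr i).right j
      = (TensorProduct.assoc k H H H).symm ((comul (R := k)).lTensor H (comul a)) := by
    rw [← r.eq, map_sum, map_sum]
    refine Finset.sum_congr rfl fun i _ => ?_
    rw [LinearMap.lTensor_tmul, ← (rr i).eq, TensorProduct.tmul_sum, map_sum]
    simp
  rw [hL, hR, Coalgebra.coassoc_symm_apply]

/-- Convolution product of linear maps from a coalgebra to an algebra. -/
def conv (φ ψ : H →ₗ[k] A) : H →ₗ[k] A :=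
  LinearMap.mul' k A ∘ₗ TensorProduct.map φ ψ ∘ₗ (comul : H →ₗ[k] H ⊗[k] H)

lemma conv_repr (φ ψ : H →ₗ[k] A) {a : H} (r : Coalgebra.ReprOld k a) :
    conv φ ψ a = ∑ i ∈ r.index, φ (r.left i) * ψ (r.right i) := by
  rw [conv, LinearMap.comp_apply, LinearMap.comp_apply, ← r.eq, map_sum, map_sum]
  simp

/-- The convolution unit. -/
def convUnit : H →ₗ[k] A := Algebra.linearMap k A ∘ₗ counit (R := k) (A := H)

lemma convUnit_apply (a : H) : (convUnit (k := k) (H := H) (A := A)) a = algebraMap k A (counit (R := k) a) :=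
  rfl

lemma conv_unit_left (φ : H →ₗ[k] A) : conv convUnit φ = φ := by
  ext a
  rw [conv_repr _ _ (reprArb k a)]
  calc ∑ i ∈ (reprArb k a).index, (convUnit (k := k) (H := H) (A := A)) ((reprArb k a).left i) * φ ((reprArb k a).right i)
      = ∑ i ∈ (reprArb k a).index, counit (R := k) ((reprArb k a).left i) • φ ((reprArb k a).right i) := by
        refine Finset.sum_congr rfl fun i _ => ?_
        rw [convUnit_apply, ← Algebra.smul_def]
    _ = φ (∑ i ∈ (reprArb k a).index, counit (R := k) ((reprArb k a).left i) • (reprArb k a).right i) := by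
        rw [map_sum]; simp
    _ = φ a := by rw [sum_counit_smul_left]

lemma conv_unit_right (φ : H →ₗ[k] A) : conv φ convUnit = φ := by
  ext a
  rw [conv_repr _ _ (reprArb k a)]
  calc ∑ i ∈ (reprArb k a).index, φ ((reprArb k a).left i) * (convUnit (k := k) (H := H) (A := A)) ((reprArb k a).right i)
      = ∑ i ∈ (reprArb k a).index, counit (R := k) ((reprArb k a).right i) • φ ((reprArb k a).left i) := by
        refine Finset.sum_congr rfl fun i _ => ?_
        rw [convUnit_apply, ← Algebra.commutes, ← Algebra.smul_def]
    _ = φ (∑ i ∈ (reprArb k a).index, counit (R := k) ((reprArb k a).right i) • (reprArb k a).left i) := by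
        rw [map_sum]; simp
    _ = φ a := by rw [sum_counit_smul_right]

lemma conv_assoc (φ ψ χ : H →ₗ[k] A) : conv (conv φ ψ) χ = conv φ (conv ψ χ) := by
  ext a
  set r := reprArb k a with hr
  set rl : ∀ i, Coalgebra.ReprOld k (r.left i) := fun i => reprArb k (r.left i) with hrl
  set rr : ∀ i, Coalgebra.ReprOld k (r.right i) := fun i => reprArb k (r.right i) with hrr
  have key := congrArg (LinearMap.mul' k A ∘ₗ
      TensorProduct.map (LinearMap.mul' k A ∘ₗ TensorProduct.map φ ψ) χ)
    (coassoc_repr r rl rr)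
  simp only [map_sum, LinearMap.comp_apply, TensorProduct.map_tmul,
    LinearMap.mul'_apply] at key
  calc conv (conv φ ψ) χ a
      = ∑ i ∈ r.index, conv φ ψ (r.left i) * χ (r.right i) := conv_repr _ _ r
    _ = ∑ i ∈ r.index, ∑ p ∈ (rl i).index,
          φ ((rl i).left p) * ψ ((rl i).right p) * χ (r.right i) := by
        refine Finset.sum_congr rfl fun i _ => ?_
        rw [conv_repr _ _ (rl i), Finset.sum_mul]
    _ = ∑ i ∈ r.index, ∑ j ∈ (rr i).index,
          φ (r.left i) * ψ ((rr i).left j) * χ ((rr i).right j) := key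
    _ = ∑ i ∈ r.index, φ (r.left i) * conv ψ χ (r.right i) := by
        refine Finset.sum_congr rfl fun i _ => ?_
        rw [conv_repr _ _ (rr i), Finset.mul_sum]
        exact Finset.sum_congr rfl fun j _ => mul_assoc _ _ _
    _ = conv φ (conv ψ χ) a := (conv_repr _ _ r).symm

lemma counit_antipode' (a : H) :
    counit (R := k) (antipode (R := k) (A := H) a) = counit (R := k) a := by
  have h2 := congrArg (counit (R := k))
    (rO_sum_antipode_mul_eq (reprArb k a))
  rw [map_sum, Bialgebra.counit_algebraMap] at h2
  simp only [Bialgebra.counit_mul] at h2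
  calc counit (R := k) (antipode (R := k) (A := H) a)
      = counit (R := k) (antipode (R := k) (A := H)
          (∑ i ∈ (reprArb k a).index, counit (R := k) ((reprArb k a).right i) • (reprArb k a).left i)) := by
        rw [sum_counit_smul_right]
    _ = ∑ i ∈ (reprArb k a).index,
          counit (R := k) (antipode (R := k) (A := H) ((reprArb k a).left i)) *
            counit (R := k) ((reprArb k a).right i) := by
        rw [map_sum, map_sum]
        refine Finset.sum_congr rfl fun i _ => ?_
        rw [map_smul, map_smul, smul_eq_mul, mul_comm]
    _ = counit (R := k) a := h2

universe u1

lemma sum_fin_reindex {M : Type*} [AddCommMonoid M] {ι : Type*} (s : Finset ι) (F : ι → M) :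
    ∑ i : ULift.{u1} (Fin s.card), F (s.equivFin.symm i.down) = ∑ i ∈ s, F i := by
  rw [← Finset.sum_coe_sort s F, ← Equiv.sum_comp s.equivFin.symm (fun i => F i)]
  exact Equiv.sum_comp Equiv.ulift (fun j => F (s.equivFin.symm j))

/-- Reindex a representation so that its index type lives in an arbitrary universe. -/
def uliftRepr {a : H} (r : Coalgebra.ReprOld k a) : Coalgebra.ReprOld k a where
  index := (Finset.univ : Finset (ULift.{u1} (Fin r.index.card)))
  left i := r.left (r.index.equivFin.symm i.down)
  right i := r.right (r.index.equivFin.symm i.down)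
  eq := by
    rw [← r.eq]
    exact sum_fin_reindex r.index fun i => r.left i ⊗ₜ[k] r.right i

lemma uliftRepr_index_sum {M : Type*} [AddCommMonoid M] {a : H} (r : Coalgebra.ReprOld k a)
    (F : H → H → M) :
    ∑ i ∈ (uliftRepr.{u1} r).index, F ((uliftRepr.{u1} r).left i) ((uliftRepr.{u1} r).right i)
    = ∑ i ∈ r.index, F (r.left i) (r.right i) :=
  sum_fin_reindex r.index fun i => F (r.left i) (r.right i)

end Aux

section Antipode

/-- The candidate `τ ∘ (S ⊗ S) ∘ Δ` for `Δ ∘ S`. -/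
def FF : H →ₗ[k] H ⊗[k] H :=
  (TensorProduct.comm k H H).toLinearMap ∘ₗ
    TensorProduct.map (antipode (R := k)) (antipode (R := k)) ∘ₗ
      (comul : H →ₗ[k] H ⊗[k] H)

lemma FF_apply_repr {a : H} (r : Coalgebra.ReprOld k a) :
    (FF : H →ₗ[k] H ⊗[k] H) a =
      ∑ i ∈ r.index, antipode (R := k) (r.right i) ⊗ₜ[k] antipode (R := k) (r.left i) := by
  rw [FF, LinearMap.comp_apply, LinearMap.comp_apply, ← r.eq, map_sum, map_sum]
  simp

lemma conv_comul_comulAntipode :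
    conv (comul (R := k) (A := H)) ((comul : H →ₗ[k] H ⊗[k] H) ∘ₗ antipode (R := k)) = convUnit := by
  ext a
  rw [conv_repr _ _ (reprArb k a), convUnit_apply]
  calc ∑ i ∈ (reprArb k a).index,
        comul (R := k) ((reprArb k a).left i) *
          ((comul : H →ₗ[k] H ⊗[k] H) ∘ₗ antipode (R := k) (A := H)) ((reprArb k a).right i)
      = comul (R := k) (∑ i ∈ (reprArb k a).index,
          (reprArb k a).left i * antipode (R := k) ((reprArb k a).right i)) := by
        rw [map_sum]
        exact Finset.sum_congr rfl fun i _ => (Bialgebra.comul_mul _ _).symm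
    _ = algebraMap k (H ⊗[k] H) (counit (R := k) a) := by
        rw [rO_sum_mul_antipode_eq, Bialgebra.comul_algebraMap]

/-- `x ↦ (c ⊗ u) ⊗ (v ⊗ w)` rebracketing helper. -/
def lam (c : H) : (H ⊗[k] H) ⊗[k] H →ₗ[k] (H ⊗[k] H) ⊗[k] (H ⊗[k] H) :=
  (TensorProduct.mk k H H c).rTensor (H ⊗[k] H) ∘ₗ (TensorProduct.assoc k H H H).toLinearMap

lemma lam_tmul (c u v w : H) :
    lam c ((u ⊗ₜ v) ⊗ₜ[k] w) = (c ⊗ₜ u) ⊗ₜ[k] (v ⊗ₜ w) := rfl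

/-- `P4 ((s ⊗ t) ⊗ Z) = (S t ⊗ S s) * Z`. -/
def P4 : (H ⊗[k] H) ⊗[k] (H ⊗[k] H) →ₗ[k] H ⊗[k] H :=
  LinearMap.mul' k (H ⊗[k] H) ∘ₗ
    ((TensorProduct.comm k H H).toLinearMap ∘ₗ
      TensorProduct.map (antipode (R := k)) (antipode (R := k))).rTensor (H ⊗[k] H)

lemma P4_tmul (s t u v : H) :
    (P4 (k := k) (H := H)) ((s ⊗ₜ t) ⊗ₜ[k] (u ⊗ₜ v)) =
      (antipode (R := k) t * u) ⊗ₜ[k] (antipode (R := k) s * v) := by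
  simp [P4, Algebra.TensorProduct.tmul_mul_tmul]

/-- The hard convolution identity: `F * Δ = u`. -/
lemma conv_FF_comul :
    conv (FF (k := k) (H := H)) (comul : H →ₗ[k] H ⊗[k] H) = convUnit := by
  ext a
  set r := reprArb k a with hr
  set rl : ∀ i, Coalgebra.ReprOld k (r.left i) := fun i => reprArb k (r.left i) with hrl
  set rr : ∀ i, Coalgebra.ReprOld k (r.right i) := fun i => reprArb k (r.right i) with hrr
  -- P2 applies comul on the last leg then multiplies
  set P2 : (H ⊗[k] H) ⊗[k] H →ₗ[k] H ⊗[k] H :=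
    P4 ∘ₗ (comul (R := k) (A := H)).lTensor (H ⊗[k] H) with hP2
  have hP2tmul : ∀ u v w : H, P2 ((u ⊗ₜ v) ⊗ₜ[k] w) =
      ((antipode (R := k) v ⊗ₜ[k] antipode (R := k) u) : H ⊗[k] H) * comul (R := k) w := by
    intro u v w
    rw [hP2, LinearMap.comp_apply, LinearMap.lTensor_tmul, P4, LinearMap.comp_apply,
      LinearMap.rTensor_tmul, LinearMap.mul'_apply]
    simp
  have key := congrArg P2 (coassoc_repr r rl rr)
  simp only [map_sum] at key
  have step4 : ∀ i ∈ r.index,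
      ∑ j ∈ (rr i).index, P2 ((r.left i ⊗ₜ (rr i).left j) ⊗ₜ[k] (rr i).right j)
      = (1 : H) ⊗ₜ[k] (antipode (R := k) (r.left i) * r.right i) := by
    intro i _
    set rc : ∀ j, Coalgebra.ReprOld k ((rr i).left j) := fun j => reprArb k ((rr i).left j) with hrc
    set re : ∀ j, Coalgebra.ReprOld k ((rr i).right j) := fun j => reprArb k ((rr i).right j) with hre
    have e1 : ∀ j ∈ (rr i).index, P2 ((r.left i ⊗ₜ (rr i).left j) ⊗ₜ[k] (rr i).right j)
        = ∑ q ∈ (re j).index, (P4 ∘ₗ lam (r.left i))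
            (((rr i).left j ⊗ₜ (re j).left q) ⊗ₜ[k] (re j).right q) := by
      intro j _
      rw [hP2, LinearMap.comp_apply, LinearMap.lTensor_tmul, ← (re j).eq,
        TensorProduct.tmul_sum, map_sum]
      refine Finset.sum_congr rfl fun q _ => ?_
      rw [LinearMap.comp_apply, lam_tmul]
    rw [Finset.sum_congr rfl e1]
    have e2 := congrArg (P4 ∘ₗ lam (r.left i)) (coassoc_repr (rr i) rc re)
    simp only [map_sum] at e2
    rw [← e2]
    have e3 : ∀ j ∈ (rr i).index, ∑ p ∈ (rc j).index,
        (P4 ∘ₗ lam (r.left i)) (((rc j).left p ⊗ₜ (rc j).right p) ⊗ₜ[k] (rr i).right j)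
        = counit (R := k) ((rr i).left j) •
            ((1 : H) ⊗ₜ[k] (antipode (R := k) (r.left i) * (rr i).right j)) := by
      intro j _
      have e4 : ∀ p ∈ (rc j).index,
          (P4 ∘ₗ lam (r.left i)) (((rc j).left p ⊗ₜ (rc j).right p) ⊗ₜ[k] (rr i).right j)
          = (antipode (R := k) ((rc j).left p) * (rc j).right p) ⊗ₜ[k]
              (antipode (R := k) (r.left i) * (rr i).right j) := by
        intro p _
        rw [LinearMap.comp_apply, lam_tmul, P4_tmul]
      rw [Finset.sum_congr rfl e4, ← TensorProduct.sum_tmul,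
        rO_sum_antipode_mul_eq_smul, TensorProduct.smul_tmul']
    rw [Finset.sum_congr rfl e3]
    have e5 : ∀ j ∈ (rr i).index, counit (R := k) ((rr i).left j) •
          ((1 : H) ⊗ₜ[k] (antipode (R := k) (r.left i) * (rr i).right j))
        = (1 : H) ⊗ₜ[k] (antipode (R := k) (r.left i) *
            (counit (R := k) ((rr i).left j) • (rr i).right j)) := by
      intro j _
      rw [mul_smul_comm, TensorProduct.tmul_smul]
    rw [Finset.sum_congr rfl e5, ← TensorProduct.tmul_sum, ← Finset.mul_sum,
      sum_counit_smul_left (rr i)]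
  calc conv (FF (k := k) (H := H)) (comul : H →ₗ[k] H ⊗[k] H) a
      = ∑ i ∈ r.index, (FF (k := k) (H := H)) (r.left i) * comul (R := k) (r.right i) :=
        conv_repr _ _ r
    _ = ∑ i ∈ r.index, ∑ p ∈ (rl i).index,
          P2 (((rl i).left p ⊗ₜ (rl i).right p) ⊗ₜ[k] r.right i) := by
        refine Finset.sum_congr rfl fun i _ => ?_
        rw [FF_apply_repr (rl i), Finset.sum_mul]
        exact Finset.sum_congr rfl fun p _ => (hP2tmul _ _ _).symm
    _ = ∑ i ∈ r.index, ∑ j ∈ (rr i).index,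
          P2 ((r.left i ⊗ₜ (rr i).left j) ⊗ₜ[k] (rr i).right j) := key
    _ = ∑ i ∈ r.index, (1 : H) ⊗ₜ[k] (antipode (R := k) (r.left i) * r.right i) :=
        Finset.sum_congr rfl step4
    _ = (1 : H) ⊗ₜ[k] (∑ i ∈ r.index, antipode (R := k) (r.left i) * r.right i) := by
        rw [TensorProduct.tmul_sum]
    _ = convUnit a := by
        rw [rO_sum_antipode_mul_eq, convUnit_apply,
          Algebra.TensorProduct.algebraMap_apply, Algebra.algebraMap_eq_smul_one,
          TensorProduct.smul_tmul]

lemma comul_comp_antipode :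
    (comul : H →ₗ[k] H ⊗[k] H) ∘ₗ antipode (R := k) (A := H) = FF := by
  refine Eq.symm ?_
  calc (FF : H →ₗ[k] H ⊗[k] H)
      = conv FF convUnit := (conv_unit_right _).symm
    _ = conv FF (conv (comul (R := k) (A := H))
          ((comul : H →ₗ[k] H ⊗[k] H) ∘ₗ antipode (R := k))) := by
        rw [conv_comul_comulAntipode, conv_unit_right]
    _ = conv (conv FF (comul (R := k) (A := H)))
          ((comul : H →ₗ[k] H ⊗[k] H) ∘ₗ antipode (R := k)) := (conv_assoc _ _ _).symm
    _ = conv convUnit ((comul : H →ₗ[k] H ⊗[k] H) ∘ₗ antipode (R := k)) := by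
        rw [conv_FF_comul]
    _ = (comul : H →ₗ[k] H ⊗[k] H) ∘ₗ antipode (R := k) := conv_unit_left _

/-- A representation of `antipode a` obtained from one of `a`. -/
def antipodeRepr {a : H} (r : Coalgebra.ReprOld k a) :
    Coalgebra.ReprOld k (antipode (R := k) (A := H) a) where
  index := r.index
  left i := antipode (R := k) (r.right i)
  right i := antipode (R := k) (r.left i)
  eq := by
    have h : comul (R := k) (antipode (R := k) (A := H) a) = FF a :=
      congrFun (congrArg DFunLike.coe comul_comp_antipode) a
    rw [show CoalgebraStruct.comul (R := k) (antipode (R := k) (A := H) a)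
        = comul (R := k) (antipode (R := k) (A := H) a) from rfl, h, FF_apply_repr r]

@[simp] lemma antipodeRepr_index {a : H} (r : Coalgebra.ReprOld k a) :
    (antipodeRepr r).index = r.index := rfl

@[simp] lemma antipodeRepr_left {a : H} (r : Coalgebra.ReprOld k a) (i) :
    (antipodeRepr r).left i = antipode (R := k) (r.right i) := rfl

@[simp] lemma antipodeRepr_right {a : H} (r : Coalgebra.ReprOld k a) (i) :
    (antipodeRepr r).right i = antipode (R := k) (r.left i) := rfl

end Antipode

variable (k H)

/-- Under the condition `(x₁ ⇀ y₁) ⇀ (x₂ ↼ y₂) = ε(y)x`, the right adjoint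
action of `H_⇀` is trivial:
`(x₁ ⇀ (S(x₄) ⇀ y₁)) ⇀ (x₂ ↼ (S(x₃) ⇀ y₂)) = ε(y)x`. -/
theorem stmt15 (f g : H ⊗[k] H →ₗ[k] H) (h : IsMatchedPairOfActions k H f g)
    (hinv : ∀ (x y : H) (rx : Coalgebra.ReprOld k x) (ry : Coalgebra.ReprOld k y),
      (∑ i ∈ rx.index, ∑ j ∈ ry.index,
          f (f (rx.left i ⊗ₜ ry.left j) ⊗ₜ g (rx.right i ⊗ₜ ry.right j))) =
        counit (R := k) y • x)
    (x y : H) (rx : Coalgebra.ReprOld k x) (rx2 : ∀ i, Coalgebra.ReprOld k (rx.right i))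
    (rx3 : ∀ i j, Coalgebra.ReprOld k ((rx2 i).right j)) (ry : Coalgebra.ReprOld k y) :
    (∑ i ∈ rx.index, ∑ j ∈ (rx2 i).index, ∑ l ∈ (rx3 i j).index, ∑ m ∈ ry.index,
        f (f (rx.left i ⊗ₜ f (antipode (R := k) ((rx3 i j).right l) ⊗ₜ ry.left m)) ⊗ₜ
            g ((rx2 i).left j ⊗ₜ f (antipode (R := k) ((rx3 i j).left l) ⊗ₜ ry.right m)))) =
      counit (R := k) y • x := by
  classical
  -- `K w = Δ (S w ⇀ y)`
  set K : H →ₗ[k] H ⊗[k] H :=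
    comul ∘ₗ f ∘ₗ ((TensorProduct.mk k H H).flip y ∘ₗ antipode (R := k)) with hK
  -- `Θ ((u ⊗ b) ⊗ w) = (u ⇀ z₁) ⇀ (b ↼ z₂)` where `z = S w ⇀ y`
  set Θ : (H ⊗[k] H) ⊗[k] H →ₗ[k] H :=
    f ∘ₗ TensorProduct.map f g ∘ₗ (tensorTensorTensorComm k H H H H).toLinearMap ∘ₗ
      K.lTensor (H ⊗[k] H) with hΘ
  have hKw : ∀ i j, K ((rx2 i).right j) =
      ∑ l ∈ (rx3 i j).index, ∑ m ∈ ry.index,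
        f (antipode (R := k) ((rx3 i j).right l) ⊗ₜ ry.left m) ⊗ₜ[k]
          f (antipode (R := k) ((rx3 i j).left l) ⊗ₜ ry.right m) := by
    intro i j
    have e0 := h.left_action.comul_act (antipode (R := k) ((rx2 i).right j)) y
      (uliftRepr (antipodeRepr (rx3 i j))) (uliftRepr ry)
    calc K ((rx2 i).right j)
        = ∑ l ∈ (uliftRepr (antipodeRepr (rx3 i j))).index, ∑ m ∈ (uliftRepr ry).index,
            f ((uliftRepr (antipodeRepr (rx3 i j))).left l ⊗ₜ (uliftRepr ry).left m) ⊗ₜ[k]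
              f ((uliftRepr (antipodeRepr (rx3 i j))).right l ⊗ₜ (uliftRepr ry).right m) := by
          simpa [hK] using e0
      _ = ∑ l ∈ (antipodeRepr (rx3 i j)).index, ∑ m ∈ (uliftRepr ry).index,
            f ((antipodeRepr (rx3 i j)).left l ⊗ₜ (uliftRepr ry).left m) ⊗ₜ[k]
              f ((antipodeRepr (rx3 i j)).right l ⊗ₜ (uliftRepr ry).right m) :=
          uliftRepr_index_sum (antipodeRepr (rx3 i j)) (fun a b =>
            ∑ m ∈ (uliftRepr ry).index,
              f (a ⊗ₜ (uliftRepr ry).left m) ⊗ₜ[k] f (b ⊗ₜ (uliftRepr ry).right m))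
      _ = ∑ l ∈ (rx3 i j).index, ∑ m ∈ ry.index,
            f (antipode (R := k) ((rx3 i j).right l) ⊗ₜ ry.left m) ⊗ₜ[k]
              f (antipode (R := k) ((rx3 i j).left l) ⊗ₜ ry.right m) := by
          refine Finset.sum_congr rfl fun l _ => ?_
          exact uliftRepr_index_sum ry (fun a b =>
            f (antipode (R := k) ((rx3 i j).right l) ⊗ₜ a) ⊗ₜ[k]
              f (antipode (R := k) ((rx3 i j).left l) ⊗ₜ b))
  have hΘtmul : ∀ (u b w : H), Θ ((u ⊗ₜ b) ⊗ₜ[k] w) =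
      f (TensorProduct.map f g
        ((tensorTensorTensorComm k H H H H) ((u ⊗ₜ[k] b) ⊗ₜ[k] K w))) := by
    intro u b w
    simp [hΘ]
  have step1 : ∀ i ∈ rx.index, ∀ j ∈ (rx2 i).index,
      (∑ l ∈ (rx3 i j).index, ∑ m ∈ ry.index,
        f (f (rx.left i ⊗ₜ f (antipode (R := k) ((rx3 i j).right l) ⊗ₜ ry.left m)) ⊗ₜ
            g ((rx2 i).left j ⊗ₜ f (antipode (R := k) ((rx3 i j).left l) ⊗ₜ ry.right m))))
      = Θ ((rx.left i ⊗ₜ (rx2 i).left j) ⊗ₜ[k] (rx2 i).right j) := by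
    intro i _ j _
    rw [hΘtmul, hKw i j]
    simp [TensorProduct.tmul_sum, TensorProduct.tensorTensorTensorComm_tmul]
  -- reassociate via coassociativity
  set rl : ∀ i, Coalgebra.ReprOld k (rx.left i) := fun i => reprArb k (rx.left i) with hrl
  have key := congrArg Θ (coassoc_repr rx rl rx2)
  simp only [map_sum] at key
  -- evaluate using `hinv`
  have hPhi : ∀ p q : H,
      f (TensorProduct.map f g
        ((tensorTensorTensorComm k H H H H) (comul (R := k) p ⊗ₜ[k] comul (R := k) q)))
      = counit (R := k) q • p := by
    intro p q
    refine Eq.trans (Eq.symm ?_) (hinv p q (uliftRepr (reprArb k p)) (uliftRepr (reprArb k q)))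
    set rp := uliftRepr (reprArb k p) with hrp
    set rq := uliftRepr (reprArb k q) with hrq
    calc ∑ i ∈ rp.index, ∑ j ∈ rq.index,
          f (f (rp.left i ⊗ₜ rq.left j) ⊗ₜ g (rp.right i ⊗ₜ rq.right j))
        = ∑ i ∈ rp.index, f (TensorProduct.map f g ((tensorTensorTensorComm k H H H H)
            ((rp.left i ⊗ₜ[k] rp.right i) ⊗ₜ[k] comul (R := k) q))) := by
          refine Finset.sum_congr rfl fun i _ => ?_
          rw [← rq.eq]
          simp [TensorProduct.tmul_sum, TensorProduct.tensorTensorTensorComm_tmul]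
      _ = f (TensorProduct.map f g ((tensorTensorTensorComm k H H H H)
            (comul (R := k) p ⊗ₜ[k] comul (R := k) q))) := by
          rw [← rp.eq]
          simp [TensorProduct.sum_tmul]
  have step3 : ∀ i ∈ rx.index,
      ∑ p ∈ (rl i).index, Θ (((rl i).left p ⊗ₜ (rl i).right p) ⊗ₜ[k] rx.right i)
      = (counit (R := k) (rx.right i) * counit (R := k) y) • rx.left i := by
    intro i _
    have hc : ∑ p ∈ (rl i).index, ((rl i).left p ⊗ₜ (rl i).right p) ⊗ₜ[k] rx.right i
        = comul (R := k) (rx.left i) ⊗ₜ[k] rx.right i := by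
      rw [← TensorProduct.sum_tmul, (rl i).eq]
    rw [← map_sum, hc, hΘ]
    simp only [LinearMap.comp_apply, LinearEquiv.coe_coe, LinearMap.lTensor_tmul]
    have hKv : K (rx.right i) =
        comul (R := k) (f (antipode (R := k) (rx.right i) ⊗ₜ y)) := rfl
    rw [hKv, hPhi, h.left_action.counit_act, counit_antipode']
  calc (∑ i ∈ rx.index, ∑ j ∈ (rx2 i).index, ∑ l ∈ (rx3 i j).index, ∑ m ∈ ry.index,
        f (f (rx.left i ⊗ₜ f (antipode (R := k) ((rx3 i j).right l) ⊗ₜ ry.left m)) ⊗ₜ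
            g ((rx2 i).left j ⊗ₜ f (antipode (R := k) ((rx3 i j).left l) ⊗ₜ ry.right m))))
      = ∑ i ∈ rx.index, ∑ j ∈ (rx2 i).index,
          Θ ((rx.left i ⊗ₜ (rx2 i).left j) ⊗ₜ[k] (rx2 i).right j) := by
        refine Finset.sum_congr rfl fun i hi => Finset.sum_congr rfl fun j hj => ?_
        exact step1 i hi j hj
    _ = ∑ i ∈ rx.index, ∑ p ∈ (rl i).index,
          Θ (((rl i).left p ⊗ₜ (rl i).right p) ⊗ₜ[k] rx.right i) := key.symm
    _ = ∑ i ∈ rx.index, (counit (R := k) (rx.right i) * counit (R := k) y) • rx.left i :=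
        Finset.sum_congr rfl step3
    _ = counit (R := k) y •
          ∑ i ∈ rx.index, counit (R := k) (rx.right i) • rx.left i := by
        rw [Finset.smul_sum]
        exact Finset.sum_congr rfl fun i _ => by rw [mul_comm, mul_smul]
    _ = counit (R := k) y • x := by rw [sum_counit_smul_right rx]

end
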